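/- Let ℓ be an odd prime and n an even positive integer such that ℓ^(n/2) is not a sum of two consecutive squares. Then there are no integers x, k with 3x² = (2ℓ^(n/2) - 1)(2ℓ^(n/2) + 1) ; in particular 1 - 4ℓ^n is not of the form -3x². -/
import Mathlib

theorem stmt_11 (ℓ n : ℕ) (hℓ : ℓ.Prime) (hℓodd : Odd ℓ) (hn : 0 < n) (hev : Even n)
    (h : ¬ ∃ j : ℕ, ℓ ^ (n / 2) = j ^ 2 + (j + 1) ^ 2) :
    (¬ ∃ x : ℤ, 3 * x ^ 2 = (2 * (ℓ : ℤ) ^ (n / 2) - 1) * (2 * (ℓ : ℤ) ^ (n / 2) + 1)) ∧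
    (∀ x : ℤ, (1 : ℤ) - 4 * (ℓ : ℤ) ^ n ≠ -3 * x ^ 2) := by
  set m : ℤ := (ℓ : ℤ) ^ (n / 2) with hm
  have hn2 : 0 < n / 2 := by
    obtain ⟨k, hk⟩ := hev; omega
  have hℓ3 : (3 : ℤ) ≤ (ℓ : ℤ) := by
    have := hℓ.two_le
    rcases hℓodd with ⟨t, ht⟩
    omega
  have hm1 : (1 : ℤ) ≤ m := one_le_pow₀ (by omega)
  have hmodd : Odd m := by
    have : Odd ((ℓ : ℤ)) := by exact_mod_cast hℓodd
    exact this.pow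
  have key : ¬ ∃ x : ℤ, 3 * x ^ 2 = (2 * m - 1) * (2 * m + 1) := by
    rintro ⟨x, hx⟩
    have hcop : IsCoprime (2 * m - 1) (2 * m + 1) := ⟨m, -(m - 1), by ring⟩
    have h3 : (3 : ℤ) ∣ (2 * m - 1) * (2 * m + 1) := ⟨x ^ 2, hx.symm⟩
    rcases (Int.prime_three.dvd_mul.mp h3) with h3d | h3d
    · -- 3 ∣ 2m-1, so 2m+1 is a square, contradiction mod 4
      obtain ⟨A, hA⟩ := h3d
      have hx2 : (2 * m + 1) * A = x ^ 2 := by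
        have h3ne : (3 : ℤ) ≠ 0 := by norm_num
        apply mul_left_cancel₀ h3ne
        rw [hx, hA]; ring
      have hcop2 : IsCoprime (2 * m + 1) A := by
        exact (hcop.symm.of_isCoprime_of_dvd_right ⟨3, by rw [hA]; ring⟩)
      obtain ⟨b, hb⟩ := Int.sq_of_isCoprime hcop2 hx2
      have hbsq : 2 * m + 1 = b ^ 2 := by
        rcases hb with hb | hb
        · exact hb
        · nlinarith [sq_nonneg b]
      obtain ⟨t, ht⟩ := hmodd
      rcases Int.even_or_odd b with ⟨c, hc⟩ | ⟨c, hc⟩ <;> subst hc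
      · have h4 : 2 * m + 1 = 4 * (c * c) := by rw [hbsq]; ring
        generalize c * c = y at h4; omega
      · have h4 : 2 * m + 1 = 4 * (c * c + c) + 1 := by rw [hbsq]; ring
        generalize c * c + c = y at h4; omega
    · -- 3 ∣ 2m+1, so 2m-1 is a square
      obtain ⟨A, hA⟩ := h3d
      have hx2 : (2 * m - 1) * A = x ^ 2 := by
        have h3ne : (3 : ℤ) ≠ 0 := by norm_num
        apply mul_left_cancel₀ h3ne
        rw [hx, hA]; ring
      have hcop2 : IsCoprime (2 * m - 1) A := by
        exact (hcop.of_isCoprime_of_dvd_right ⟨3, by rw [hA]; ring⟩)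
      obtain ⟨a, ha⟩ := Int.sq_of_isCoprime hcop2 hx2
      have hasq : 2 * m - 1 = a ^ 2 := by
        rcases ha with ha | ha
        · exact ha
        · nlinarith [sq_nonneg a]
      rcases Int.even_or_odd a with ⟨c, hc⟩ | ⟨c, hc⟩
      · subst hc
        have h4 : 2 * m - 1 = 4 * (c * c) := by rw [hasq]; ring
        generalize c * c = y at h4; omega
      · subst hc
        have hmeq : m = c ^ 2 + (c + 1) ^ 2 := by nlinarith
        obtain ⟨j, hj⟩ : ∃ j : ℕ, (j : ℤ) ^ 2 + ((j : ℤ) + 1) ^ 2 = c ^ 2 + (c + 1) ^ 2 := by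
          rcases le_or_gt 0 c with hc0 | hc0
          · exact ⟨c.toNat, by rw [Int.toNat_of_nonneg hc0]⟩
          · exact ⟨(-(c + 1)).toNat, by rw [Int.toNat_of_nonneg (by omega)]; ring⟩
        apply h
        refine ⟨j, ?_⟩
        have : (ℓ : ℤ) ^ (n / 2) = (j : ℤ) ^ 2 + ((j : ℤ) + 1) ^ 2 := by
          rw [← hm, hmeq, hj]
        exact_mod_cast this
  refine ⟨key, ?_⟩
  intro x hx
  apply key
  refine ⟨x, ?_⟩
  have hnn : ℓ ^ n = (ℓ ^ (n / 2)) ^ 2 := by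
    rw [← pow_mul]
    congr 1
    obtain ⟨k, hk⟩ := hev; omega
  have : ((ℓ : ℤ)) ^ n = m ^ 2 := by
    rw [hm, ← pow_mul]
    congr 1
    obtain ⟨k, hk⟩ := hev; omega
  nlinarith [this, hx]
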